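/- Let ψ denote the digamma function. For real A > 0, s ∈ (0,1), and x ∈ (0, A), the sum S(x) := -ψ(A+1+s-x) + ψ(A+1-x) + ψ(A+s+x) - ψ(A+x) satisfies: S(x) > 0 if x < 1/2, S(1/2) = 0 (when 1/2 < A), and S(x) < 0 if x > 1/2. -/

import Mathlib

/-!
Writing `g t = ψ(t + s) - ψ t`, the sum is `g(A + x) - g(A + 1 - x)`, so it suffices that `g` is
strictly decreasing on `(0, ∞)`. Since `ψ(t + 1) = ψ t + 1/t` and `ψ` is monotone (log-convexity
of `Γ`), `ψ(b + N) - ψ(a + N) → 0`, and telescoping gives `ψ b - ψ a = ∑ₘ (1/(a + m) - 1/(b + m))`.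
Hence `g t = ∑ₘ s / ((t + m)(t + s + m))`, and every term is strictly decreasing in `t`.
-/

/-- The digamma function `ψ(z) = Γ'(z)/Γ(z) = (log Γ)'(z)`. -/
noncomputable def digamma (z : ℝ) : ℝ := deriv (fun y : ℝ => Real.log (Real.Gamma y)) z

open Real Filter Topology Finset Set

lemma hasDerivAt_log_Gamma_digamma {x : ℝ} (hx : 0 < x) :
    HasDerivAt (fun y => log (Gamma y)) (digamma x) x := by
  have hΓ : DifferentiableAt ℝ Gamma x :=
    differentiableAt_Gamma fun m => ((neg_nonpos.mpr m.cast_nonneg).trans_lt hx).ne'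
  exact (hΓ.log (Gamma_pos_of_pos hx).ne').hasDerivAt

lemma digamma_add_one {x : ℝ} (hx : 0 < x) : digamma (x + 1) = digamma x + x⁻¹ := by
  have hshift : HasDerivAt (fun y => log (Gamma (y + 1))) (digamma (x + 1)) x :=
    (hasDerivAt_log_Gamma_digamma (by linarith)).comp_add_const x 1
  have hsum : HasDerivAt (fun y => log (Gamma y) + log y) (digamma x + x⁻¹) x :=
    (hasDerivAt_log_Gamma_digamma hx).add (hasDerivAt_log hx.ne')
  refine hshift.unique (hsum.congr_of_eventuallyEq ?_)
  filter_upwards [lt_mem_nhds hx] with y hy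
  rw [Gamma_add_one hy.ne', log_mul hy.ne' (Gamma_pos_of_pos hy).ne', add_comm]

lemma digamma_add_nat {x : ℝ} (hx : 0 < x) (n : ℕ) :
    digamma (x + n) = digamma x + ∑ j ∈ range n, (x + j)⁻¹ := by
  induction n with
  | zero => simp
  | succ n ih =>
    rw [Nat.cast_succ, ← add_assoc, digamma_add_one (by positivity), ih, sum_range_succ, add_assoc]

lemma digamma_add_nat_le {x : ℝ} (hx : 0 < x) (n : ℕ) : digamma (x + n) ≤ digamma x + n / x := by
  rw [digamma_add_nat hx]
  gcongr
  calc ∑ j ∈ range n, (x + j)⁻¹ ≤ ∑ _j ∈ range n, x⁻¹ :=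
        sum_le_sum fun j _ => inv_anti₀ hx (le_add_of_nonneg_right j.cast_nonneg)
    _ = n / x := by rw [sum_const, card_range, nsmul_eq_mul, div_eq_mul_inv]

lemma monotoneOn_digamma : MonotoneOn digamma (Ioi 0) :=
  convexOn_log_Gamma.monotoneOn_deriv fun _ hx => (hasDerivAt_log_Gamma_digamma hx).differentiableAt

lemma tendsto_digamma_add_nat_sub {a b : ℝ} (ha : 0 < a) (hab : a ≤ b) :
    Tendsto (fun N : ℕ => digamma (b + N) - digamma (a + N)) atTop (𝓝 0) := by
  have hb : 0 < b := ha.trans_le hab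
  set k := ⌈b - a⌉₊
  have hbound : ∀ N : ℕ, digamma (b + N) - digamma (a + N) ≤ k / (a + N) := fun N => by
    have hle : b + N ≤ a + N + k := by linarith [Nat.le_ceil (b - a)]
    have := monotoneOn_digamma (by positivity : (0 : ℝ) < b + N)
      (by positivity : (0 : ℝ) < a + N + k) hle
    linarith [digamma_add_nat_le (x := a + N) (by positivity) k]
  have hnonneg : ∀ N : ℕ, 0 ≤ digamma (b + N) - digamma (a + N) := fun N =>
    sub_nonneg.mpr <| monotoneOn_digamma (by positivity : (0 : ℝ) < a + N)
      (by positivity : (0 : ℝ) < b + N) (by linarith)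
  refine squeeze_zero hnonneg hbound ?_
  exact tendsto_const_nhds.div_atTop (tendsto_atTop_add_const_left _ a tendsto_natCast_atTop_atTop)

lemma hasSum_inv_sub_inv_digamma {a b : ℝ} (ha : 0 < a) (hab : a ≤ b) :
    HasSum (fun m : ℕ => (a + m)⁻¹ - (b + m)⁻¹) (digamma b - digamma a) := by
  have hb : 0 < b := ha.trans_le hab
  refine (hasSum_iff_tendsto_nat_of_nonneg (fun m => sub_nonneg.mpr <|
    inv_anti₀ (by positivity) (by linarith)) _).mpr ?_
  have htelescope : ∀ N : ℕ, ∑ m ∈ range N, ((a + m)⁻¹ - (b + m)⁻¹)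
      = digamma b - digamma a - (digamma (b + N) - digamma (a + N)) := fun N => by
    rw [sum_sub_distrib, digamma_add_nat ha, digamma_add_nat hb]
    ring
  simp only [htelescope]
  simpa using tendsto_const_nhds.sub (tendsto_digamma_add_nat_sub ha hab)

lemma inv_sub_inv_add_lt_of_lt {u v s : ℝ} (hu : 0 < u) (huv : u < v) (hs : 0 < s) :
    v⁻¹ - (v + s)⁻¹ < u⁻¹ - (u + s)⁻¹ := by
  have hv : 0 < v := hu.trans huv
  rw [inv_sub_inv hv.ne' (by positivity), inv_sub_inv hu.ne' (by positivity), add_sub_cancel_left,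
    add_sub_cancel_left]
  gcongr

lemma strictAntiOn_digamma_add_sub {s : ℝ} (hs : 0 < s) :
    StrictAntiOn (fun t => digamma (t + s) - digamma t) (Ioi 0) := by
  intro t (ht : 0 < t) t' (ht' : 0 < t') htt'
  refine hasSum_lt (f := fun m : ℕ => (t' + m)⁻¹ - (t' + s + m)⁻¹) (i := 0) (fun m => ?_) ?_
    (hasSum_inv_sub_inv_digamma ht' (by linarith)) (hasSum_inv_sub_inv_digamma ht (by linarith))
  · simp only [add_right_comm _ s]
    exact (inv_sub_inv_add_lt_of_lt (by positivity) (by linarith) hs).le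
  · simpa using inv_sub_inv_add_lt_of_lt ht htt' hs

theorem digamma_sum_sign_general (A s : ℝ) (hs0 : 0 < s) :
    (∀ x : ℝ, 0 < x → x < A → x < 1 / 2 →
        0 < -digamma (A + 1 + s - x) + digamma (A + 1 - x) + digamma (A + s + x) - digamma (A + x)) ∧
    (1 / 2 < A →
        -digamma (A + 1 + s - 1 / 2) + digamma (A + 1 - 1 / 2) + digamma (A + s + 1 / 2)
          - digamma (A + 1 / 2) = 0) ∧
    (∀ x : ℝ, 0 < x → x < A → 1 / 2 < x →
        -digamma (A + 1 + s - x) + digamma (A + 1 - x) + digamma (A + s + x) - digamma (A + x) < 0)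
    := by
  set g := fun t => digamma (t + s) - digamma t
  have hg : StrictAntiOn g (Ioi 0) := strictAntiOn_digamma_add_sub hs0
  have hsplit : ∀ x : ℝ,
      -digamma (A + 1 + s - x) + digamma (A + 1 - x) + digamma (A + s + x) - digamma (A + x)
        = g (A + x) - g (A + 1 - x) :=
    fun x => by simp only [g]; ring_nf
  refine ⟨fun x hx hxA hx2 => ?_, fun _ => by ring_nf, fun x hx hxA hx2 => ?_⟩
  · rw [hsplit, sub_pos]
    exact hg (by linarith : (0 : ℝ) < A + x) (by linarith : (0 : ℝ) < A + 1 - x) (by linarith)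
  · rw [hsplit, sub_neg]
    exact hg (by linarith : (0 : ℝ) < A + 1 - x) (by linarith : (0 : ℝ) < A + x) (by linarith)

theorem digamma_sum_sign (A s : ℝ) (hA : 0 < A) (hs0 : 0 < s) (hs1 : s < 1) :
    (∀ x : ℝ, 0 < x → x < A → x < 1 / 2 →
        0 < -digamma (A + 1 + s - x) + digamma (A + 1 - x) + digamma (A + s + x) - digamma (A + x)) ∧
    (1 / 2 < A →
        -digamma (A + 1 + s - 1 / 2) + digamma (A + 1 - 1 / 2) + digamma (A + s + 1 / 2)
          - digamma (A + 1 / 2) = 0) ∧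
    (∀ x : ℝ, 0 < x → x < A → 1 / 2 < x →
        -digamma (A + 1 + s - x) + digamma (A + 1 - x) + digamma (A + s + x) - digamma (A + x) < 0) :=
  digamma_sum_sign_general A s hs0
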